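/- For every composition s = (s(1),…,s(a)) with s(i) ≥ 2 for all i, the set of s-trees is in bijection with the set of noncrossing (s−𝟏)-partitions of the set [|s|−a]; in particular these two sets have the same cardinality. -/

import Mathlib

/-- A planar rooted tree: a root together with a (possibly empty) ordered list of subtrees. -/
inductive PTree : Type where
  | node : List PTree → PTree

namespace PTree

/-- The signature of a planar rooted tree: the numbers of children of its internal
nodes, listed in preorder. -/
def signature : PTree → List ℕ
  | node [] => []
  | node (t :: ts) =>
    (t :: ts).length :: ((t :: ts).attach.map (fun x => signature x.1)).flatten
decreasing_by
  have := List.sizeOf_lt_of_mem x.2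
  simp at this ⊢
  omega

/-- The preorder word of a planar rooted tree: `true` (= N) for each internal node and
`false` (= E) for each leaf, nodes listed in preorder. -/
def word : PTree → List Bool
  | node ts => (!ts.isEmpty) :: (ts.attach.map (fun x => word x.1)).flatten
decreasing_by
  have := List.sizeOf_lt_of_mem x.2
  simp at this ⊢
  omega

end PTree

/-- A finite partition is noncrossing if there are no `x < y < z < w` with `x, z` in one
block and `y, w` in a different block. -/
def Noncrossing {n : ℕ} (π : Finpartition (Finset.Icc 1 n)) : Prop :=
  ¬ ∃ B₁ ∈ π.parts, ∃ B₂ ∈ π.parts, B₁ ≠ B₂ ∧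
    ∃ x y z w : ℕ, x < y ∧ y < z ∧ z < w ∧ x ∈ B₁ ∧ z ∈ B₁ ∧ y ∈ B₂ ∧ w ∈ B₂

/-- `L` is the list of blocks of `π` ordered by increasing minima. -/
def SortedBlocks {n : ℕ} (π : Finpartition (Finset.Icc 1 n)) (L : List (Finset ℕ)) : Prop :=
  L.Nodup ∧ L.toFinset = π.parts ∧ L.Pairwise (fun B C => B.min < C.min)

/-- `sizes` is obtained from the composition `v` by summing adjacent entries,
i.e. `v` refines `sizes`. -/
def Refines (v sizes : List ℕ) : Prop :=
  ∃ chunks : List (List ℕ), (∀ c ∈ chunks, c ≠ []) ∧ chunks.flatten = v ∧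
    chunks.map List.sum = sizes

/-!
Number the leaves of an `s`-tree `1, …, n + 1`, where `n = |s| - ℓ(s)`, and call `x` the gap
between leaves `x` and `x + 1`. An internal node with `k` children is crossed by the `k - 1` gaps
between consecutive children; putting together the gaps of the nodes of each maximal chain of
first children gives a partition of `[n]`. It is noncrossing because the gaps below a node form
an interval, and its block sizes are sums of consecutive entries of `s - 𝟏`, read in preorder.

Conversely, the block containing `1` is the block of the chain starting at the root, and its
`k - 1` largest elements are the gaps between the `k` children of the root. They cut `[n]` into
the intervals of the subtrees, every other block lies in one of them by noncrossing, and the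
refinement condition says how `s` splits accordingly; so the tree is recovered recursively and
uniquely.
-/

theorem List.sum_map_sub_one {s : List ℕ} (hs : ∀ x ∈ s, 1 ≤ x) :
    (s.map (· - 1)).sum = s.sum - s.length := by
  induction s with
  | nil => rfl
  | cons a s ih =>
    have := ih fun x hx => hs x (List.mem_cons_of_mem _ hx)
    have := hs a List.mem_cons_self
    have : s.length ≤ s.sum := by
      simpa using List.length_le_sum_of_one_le s fun x hx => hs x (List.mem_cons_of_mem _ hx)
    simp
    omega

theorem List.eq_of_append_eq_of_forall {α : Type*} {p : α → Prop} {l₁ l₂ r₁ r₂ : List α}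
    (h : l₁ ++ r₁ = l₂ ++ r₂) (hl₁ : ∀ a ∈ l₁, p a) (hl₂ : ∀ a ∈ l₂, p a)
    (hr₁ : ∀ a ∈ r₁, ¬ p a) (hr₂ : ∀ a ∈ r₂, ¬ p a) : l₁ = l₂ ∧ r₁ = r₂ := by
  rcases List.append_eq_append_iff.1 h with ⟨a, rfl, rfl⟩ | ⟨c, rfl, rfl⟩
  · obtain rfl : a = [] := List.eq_nil_iff_forall_not_mem.2 fun x hx =>
      hr₁ x (List.mem_append_left _ hx) (hl₂ x (List.mem_append_right _ hx))
    simp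
  · obtain rfl : c = [] := List.eq_nil_iff_forall_not_mem.2 fun x hx =>
      hr₂ x (List.mem_append_left _ hx) (hl₁ x (List.mem_append_right _ hx))
    simp

theorem List.eq_of_append_eq_of_sum_map_eq {α : Type*} {f : α → ℕ} {l₁ l₂ r₁ r₂ : List α}
    (h : l₁ ++ r₁ = l₂ ++ r₂) (hpos : ∀ a ∈ l₁ ++ r₁, 0 < f a)
    (hsum : (l₁.map f).sum = (l₂.map f).sum) : l₁ = l₂ ∧ r₁ = r₂ := by
  have key : ∀ {l a : List α}, (∀ x ∈ a, 0 < f x) → ((l ++ a).map f).sum = (l.map f).sum →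
      a = [] := fun {l a} ha hs => by
    cases a with
    | nil => rfl
    | cons x a => have := ha x List.mem_cons_self; simp at hs; omega
  rcases List.append_eq_append_iff.1 h with ⟨a, rfl, rfl⟩ | ⟨c, rfl, rfl⟩
  · obtain rfl : a = [] := key (fun x hx => hpos x (by simp [hx])) hsum.symm
    simp
  · obtain rfl : c = [] := key (fun x hx => hpos x (by simp [hx])) hsum
    simp

theorem Finset.eq_of_union_eq_of_lt {X Y X' Y' : Finset ℕ} (h : X ∪ Y = X' ∪ Y')
    (hY : ∀ y ∈ Y, ∀ x ∈ X, y < x) (hY' : ∀ y ∈ Y', ∀ x ∈ X', y < x) (hcard : X.card = X'.card) :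
    X = X' ∧ Y = Y' := by
  have upper : ∀ {X Y X' Y' : Finset ℕ}, X ∪ Y = X' ∪ Y' → (∀ y ∈ Y, ∀ x ∈ X, y < x) →
      (∀ y ∈ Y', ∀ x ∈ X', y < x) → ¬ X ⊆ X' → X' ⊆ X := fun {X Y X' Y'} h hY hY' hsub => by
    obtain ⟨x, hx, hxX'⟩ := Finset.not_subset.1 hsub
    have hxY' : x ∈ Y' := (Finset.mem_union.1 (h ▸ Finset.mem_union_left Y hx)).resolve_left hxX'
    intro z hz
    rcases Finset.mem_union.1 (h ▸ Finset.mem_union_left Y' hz) with hzX | hzY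
    · exact hzX
    · exact absurd (hY z hzY x hx) (hY' x hxY' z hz).not_gt
  have hX : X = X' := by
    by_cases hsub : X ⊆ X'
    · exact Finset.eq_of_subset_of_card_le hsub hcard.ge
    · exact (Finset.eq_of_subset_of_card_le (upper h hY hY' hsub) hcard.le).symm
  subst hX
  have hdisj : ∀ {Y : Finset ℕ}, (∀ y ∈ Y, ∀ x ∈ X, y < x) → Y = (X ∪ Y) \ X := fun hY => by
    ext y
    simp only [Finset.mem_sdiff, Finset.mem_union]
    exact ⟨fun hy => ⟨Or.inr hy, fun hyX => lt_irrefl y (hY y hy y hyX)⟩,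
      fun ⟨hy, hyX⟩ => hy.resolve_left hyX⟩
  exact ⟨rfl, by rw [hdisj hY, hdisj hY', h]⟩

theorem Finset.exists_eq_union_of_le_card {B : Finset ℕ} {n : ℕ} (hn : n ≤ B.card) :
    ∃ (l : List ℕ) (H : Finset ℕ), B = l.toFinset ∪ H ∧ l.length = n ∧ l.Pairwise (· < ·) ∧
      ∀ y ∈ H, ∀ a ∈ l, y < a := by
  have hsort := (B.sortedLT_sort).pairwise
  rw [← List.take_append_drop (B.card - n) (B.sort (· ≤ ·))] at hsort
  refine ⟨(B.sort (· ≤ ·)).drop (B.card - n), ((B.sort (· ≤ ·)).take (B.card - n)).toFinset,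
    ?_, by simp; omega, (List.pairwise_append.1 hsort).2.1,
    fun y hy a ha => (List.pairwise_append.1 hsort).2.2 y (List.mem_toFinset.1 hy) a ha⟩
  ext x
  rw [Finset.mem_union, List.mem_toFinset, List.mem_toFinset, or_comm, ← List.mem_append,
    List.take_append_drop, Finset.mem_sort]

namespace Refines

variable {v v₁ v₂ a b l : List ℕ}

theorem nil : Refines [] [] := ⟨[], by simp, rfl, rfl⟩

theorem eq_nil (h : Refines v []) : v = [] := by
  obtain ⟨c, -, rfl, hc⟩ := h
  simp [List.map_eq_nil_iff.1 hc]

theorem sum_eq (h : Refines v l) : v.sum = l.sum := by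
  obtain ⟨c, -, rfl, rfl⟩ := h
  simp [List.sum_flatten]

theorem append (h₁ : Refines v₁ a) (h₂ : Refines v₂ b) : Refines (v₁ ++ v₂) (a ++ b) := by
  obtain ⟨c₁, hc₁, rfl, rfl⟩ := h₁
  obtain ⟨c₂, hc₂, rfl, rfl⟩ := h₂
  exact ⟨c₁ ++ c₂, by simpa [or_imp, forall_and] using ⟨hc₁, hc₂⟩, by simp, by simp⟩

theorem exists_of_eq_append (h : Refines v (a ++ b)) :
    ∃ v₁ v₂, v = v₁ ++ v₂ ∧ Refines v₁ a ∧ Refines v₂ b := by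
  obtain ⟨c, hc, rfl, hsum⟩ := h
  obtain ⟨c₁, c₂, rfl, rfl, rfl⟩ := List.map_eq_append_iff.1 hsum
  exact ⟨c₁.flatten, c₂.flatten, by simp, ⟨c₁, fun x hx => hc x (by simp [hx]), rfl, rfl⟩,
    ⟨c₂, fun x hx => hc x (by simp [hx]), rfl, rfl⟩⟩

theorem singleton (hv : v ≠ []) : Refines v [v.sum] := ⟨[v], by simpa using hv, by simp, by simp⟩

theorem cons (m : ℕ) (h : Refines v l) : Refines (m :: v) (m :: l) := by
  simpa using (singleton (List.cons_ne_nil m [])).append h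

theorem cons_add (m : ℕ) {n : ℕ} (h : Refines v (n :: l)) : Refines (m :: v) ((m + n) :: l) := by
  obtain ⟨_ | ⟨c, cs⟩, hc, rfl, hsum⟩ := h
  · simp at hsum
  · obtain ⟨rfl, rfl⟩ := List.cons_eq_cons.1 hsum
    exact ⟨(m :: c) :: cs, by simpa using fun x hx => hc x (by simp [hx]), by simp, by simp⟩

theorem exists_of_cons_cons {m n : ℕ} (h : Refines (m :: v) (n :: l)) :
    ∃ v₁ v₂, v = v₁ ++ v₂ ∧ n = m + v₁.sum ∧ Refines v₂ l := by
  obtain ⟨_ | ⟨_ | ⟨m', c⟩, cs⟩, hc, hflat, hsum⟩ := h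
  · simp at hsum
  · exact absurd rfl (hc [] List.mem_cons_self)
  · simp only [List.flatten_cons, List.cons_append, List.cons.injEq] at hflat
    simp only [List.map_cons, List.sum_cons, List.cons.injEq] at hsum
    obtain ⟨rfl, rfl⟩ := hflat
    exact ⟨c, cs.flatten, rfl, hsum.1.symm,
      ⟨cs, fun x hx => hc x (List.mem_cons_of_mem _ hx), rfl, hsum.2⟩⟩

end Refines

/-! ### Noncrossing lists of blocks -/

def OneSided (C : Finset ℕ) (b : ℕ) : Prop := (∀ x ∈ C, x < b) ∨ ∀ x ∈ C, b < x

/- For blocks listed by increasing minima, being noncrossing means that no element of an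
earlier block lies between two elements of a later one. -/
def Precedes (B C : Finset ℕ) : Prop := B.min < C.min ∧ ∀ b ∈ B, OneSided C b

structure IsNCBlockList (L : List (Finset ℕ)) : Prop where
  nonempty : ∀ B ∈ L, B.Nonempty
  pairwise : L.Pairwise Precedes

def blockUnion (L : List (Finset ℕ)) : Finset ℕ := L.toFinset.sup id

theorem mem_blockUnion {L : List (Finset ℕ)} {x : ℕ} : x ∈ blockUnion L ↔ ∃ B ∈ L, x ∈ B := by
  simp [blockUnion, Finset.mem_sup]

theorem blockUnion_nil : blockUnion [] = ∅ := rfl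

theorem blockUnion_cons (B : Finset ℕ) (L : List (Finset ℕ)) :
    blockUnion (B :: L) = B ∪ blockUnion L := by
  simp [blockUnion]

theorem blockUnion_append (L₁ L₂ : List (Finset ℕ)) :
    blockUnion (L₁ ++ L₂) = blockUnion L₁ ∪ blockUnion L₂ := by
  simp [blockUnion, Finset.sup_union]

theorem subset_blockUnion {L : List (Finset ℕ)} {B : Finset ℕ} (hB : B ∈ L) : B ⊆ blockUnion L :=
  fun _ hx => mem_blockUnion.2 ⟨B, hB, hx⟩

theorem min_lt_min_of_mem {B C : Finset ℕ} {b : ℕ} (hb : b ∈ B) (h : ∀ x ∈ C, b < x) :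
    B.min < C.min := by
  rcases C.eq_empty_or_nonempty with rfl | hC
  · exact (Finset.min_le hb).trans_lt (by simp)
  · exact (Finset.min_le hb).trans_lt
      (by rw [← Finset.coe_min' hC]; exact WithTop.coe_lt_coe.2 (h _ (C.min'_mem hC)))

theorem exists_lt_of_min_lt {B C : Finset ℕ} (h : B.min < C.min) {c : ℕ} (hc : c ∈ C) :
    ∃ b ∈ B, b < c := by
  obtain ⟨b, hb⟩ := WithTop.ne_top_iff_exists.1 (h.trans_le (Finset.min_le hc)).ne_top
  exact ⟨b, Finset.mem_of_min hb.symm, WithTop.coe_lt_coe.1 (hb ▸ h.trans_le (Finset.min_le hc))⟩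

theorem precedes_of_mem {B C : Finset ℕ} {b : ℕ} (hb : b ∈ B) (hlt : ∀ x ∈ C, b < x)
    (h : ∀ b ∈ B, OneSided C b) : Precedes B C :=
  ⟨min_lt_min_of_mem hb hlt, h⟩

theorem precedes_of_lt {B C : Finset ℕ} (hB : B.Nonempty) (h : ∀ b ∈ B, ∀ x ∈ C, b < x) :
    Precedes B C :=
  let ⟨b, hb⟩ := hB
  precedes_of_mem hb (h b hb) fun b' hb' => Or.inr (h b' hb')

theorem Precedes.union_left {A H D : Finset ℕ} (h : Precedes H D)
    (hA : ∀ a ∈ A, ∀ x ∈ D, x < a) : Precedes (A ∪ H) D := by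
  refine ⟨lt_of_le_of_lt ?_ h.1, fun b hb => ?_⟩
  · exact Finset.min_mono Finset.subset_union_right
  · rcases Finset.mem_union.1 hb with hb | hb
    · exact Or.inl (hA b hb)
    · exact h.2 b hb

theorem Precedes.disjoint {B C : Finset ℕ} (h : Precedes B C) : Disjoint B C :=
  Finset.disjoint_left.2 fun b hb hc => by
    rcases h.2 b hb with h' | h' <;> exact lt_irrefl b (h' b hc)

theorem Precedes.ne {B C : Finset ℕ} (h : Precedes B C) : B ≠ C := by
  rintro rfl; exact lt_irrefl _ h.1

namespace IsNCBlockList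

theorem nil : IsNCBlockList [] := ⟨by simp, .nil⟩

theorem cons {B : Finset ℕ} {L : List (Finset ℕ)} (hB : B.Nonempty) (hBL : ∀ C ∈ L, Precedes B C)
    (hL : IsNCBlockList L) : IsNCBlockList (B :: L) :=
  ⟨by simpa [hB] using hL.nonempty, .cons hBL hL.pairwise⟩

theorem sublist {L L' : List (Finset ℕ)} (h : IsNCBlockList L) (hs : L'.Sublist L) :
    IsNCBlockList L' :=
  ⟨fun B hB => h.nonempty B (hs.subset hB), h.pairwise.sublist hs⟩

theorem append {L₁ L₂ : List (Finset ℕ)} (h₁ : IsNCBlockList L₁) (h₂ : IsNCBlockList L₂)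
    (hsep : ∀ B ∈ L₁, ∀ C ∈ L₂, ∀ b ∈ B, ∀ x ∈ C, b < x) : IsNCBlockList (L₁ ++ L₂) := by
  refine ⟨fun B hB => ?_, List.pairwise_append.2 ⟨h₁.pairwise, h₂.pairwise, fun B hB C hC => ?_⟩⟩
  · rcases List.mem_append.1 hB with hB | hB
    exacts [h₁.nonempty B hB, h₂.nonempty B hB]
  · exact precedes_of_lt (h₁.nonempty B hB) (hsep B hB C hC)

theorem nodup {L : List (Finset ℕ)} (h : IsNCBlockList L) : L.Nodup :=
  h.pairwise.imp Precedes.ne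

theorem pairwise_disjoint {L : List (Finset ℕ)} (h : IsNCBlockList L) : L.Pairwise Disjoint :=
  h.pairwise.imp Precedes.disjoint

theorem eq_nil {L : List (Finset ℕ)} (h : IsNCBlockList L) (hL : blockUnion L = ∅) : L = [] :=
  List.eq_nil_iff_forall_not_mem.2 fun B hB =>
    (h.nonempty B hB).ne_empty (Finset.subset_empty.1 (hL ▸ subset_blockUnion hB))

theorem eq_of_toFinset_eq {L L' : List (Finset ℕ)} (h : IsNCBlockList L) (h' : IsNCBlockList L')
    (hL : L.toFinset = L'.toFinset) : L = L' := by
  have : Std.Irrefl Precedes := ⟨fun B hB => hB.ne rfl⟩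
  have : Std.Antisymm Precedes := ⟨fun B C hBC hCB => absurd (hBC.1.trans hCB.1) (lt_irrefl _)⟩
  exact h.pairwise.eq_of_mem_iff h'.pairwise fun B => by simpa using Finset.ext_iff.1 hL B

theorem mem_head {B : Finset ℕ} {L : List (Finset ℕ)} (h : IsNCBlockList (B :: L)) {x : ℕ}
    (hx : x ∈ blockUnion (B :: L)) (hmin : ∀ y ∈ blockUnion (B :: L), x ≤ y) : x ∈ B := by
  obtain ⟨C, hC, hxC⟩ := mem_blockUnion.1 hx
  rcases List.mem_cons.1 hC with rfl | hC
  · exact hxC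
  obtain ⟨b, hb, hbx⟩ := exists_lt_of_min_lt (List.rel_of_pairwise_cons h.pairwise hC).1 hxC
  exact absurd (hmin b (subset_blockUnion List.mem_cons_self hb)) hbx.not_ge

theorem exists_split {L : List (Finset ℕ)} (h : IsNCBlockList L) {b : ℕ}
    (hb : ∀ B ∈ L, OneSided B b) :
    ∃ L₁ L₂, L = L₁ ++ L₂ ∧ (∀ B ∈ L₁, ∀ x ∈ B, x < b) ∧ ∀ B ∈ L₂, ∀ x ∈ B, b < x := by
  induction L with
  | nil => exact ⟨[], [], rfl, by simp, by simp⟩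
  | cons B L ih =>
    rcases hb B List.mem_cons_self with hlo | hhi
    · obtain ⟨L₁, L₂, rfl, h₁, h₂⟩ :=
        ih (h.sublist (List.sublist_cons_self B _)) fun C hC => hb C (List.mem_cons_of_mem _ hC)
      exact ⟨B :: L₁, L₂, rfl, List.forall_mem_cons.2 ⟨hlo, h₁⟩, h₂⟩
    · refine ⟨[], B :: L, rfl, by simp, fun C hC => ?_⟩
      rcases List.mem_cons.1 hC with rfl | hC'
      · exact hhi
      refine (hb C hC).resolve_left fun hlo => ?_
      obtain ⟨c, hc⟩ := h.nonempty C hC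
      obtain ⟨x, hx, hxc⟩ := exists_lt_of_min_lt (List.rel_of_pairwise_cons h.pairwise hC').1 hc
      exact absurd (hhi x hx) (hxc.trans (hlo c hc)).not_gt

theorem not_crossing {L : List (Finset ℕ)} (h : IsNCBlockList L) {B C : Finset ℕ} (hB : B ∈ L)
    (hC : C ∈ L) (hne : B ≠ C) {x y z w : ℕ} (hxy : x < y) (hyz : y < z) (hzw : z < w)
    (hx : x ∈ B) (hz : z ∈ B) (hy : y ∈ C) (hw : w ∈ C) : False := by
  have : Std.Symm fun B C => Precedes B C ∨ Precedes C B := ⟨fun _ _ h => h.symm⟩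
  have hsym : L.Pairwise fun B C => Precedes B C ∨ Precedes C B := h.pairwise.imp Or.inl
  rcases hsym.forall hB hC hne with h | h
  · rcases h.2 z hz with h' | h'
    exacts [(h' w hw).not_gt hzw, (h' y hy).not_gt hyz]
  · rcases h.2 y hy with h' | h'
    exacts [(h' z hz).not_gt hyz, (h' x hx).not_gt hxy]

theorem of_noncrossing {L : List (Finset ℕ)} (hne : ∀ B ∈ L, B.Nonempty)
    (hdisj : ∀ B ∈ L, ∀ C ∈ L, B ≠ C → Disjoint B C)
    (hsort : L.Pairwise fun B C => B.min < C.min)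
    (hnc : ∀ B ∈ L, ∀ C ∈ L, B ≠ C → ∀ x y z w : ℕ, x < y → y < z → z < w →
      x ∈ B → z ∈ B → y ∈ C → w ∈ C → False) :
    IsNCBlockList L := by
  refine ⟨hne, hsort.imp_of_mem fun {B C} hB hC hlt => ⟨hlt, fun b hb => ?_⟩⟩
  have hBC : B ≠ C := by rintro rfl; exact lt_irrefl _ hlt
  have hbC : b ∉ C := Finset.disjoint_left.1 (hdisj B hB C hC hBC) hb
  by_contra hcon
  simp only [OneSided, not_or, not_forall, not_lt] at hcon
  obtain ⟨⟨y, hy, hby⟩, ⟨w, hw, hwb⟩⟩ := hcon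
  obtain ⟨x, hx, hxw⟩ := exists_lt_of_min_lt hlt hw
  exact hnc B hB C hC hBC x w b y hxw (lt_of_le_of_ne hwb (by rintro rfl; exact hbC hw))
    (lt_of_le_of_ne hby (by rintro rfl; exact hbC hy)) hx hb hw hy

theorem card_blockUnion {L : List (Finset ℕ)} (h : IsNCBlockList L) :
    (blockUnion L).card = (L.map Finset.card).sum := by
  have : Std.Symm (Disjoint : Finset ℕ → Finset ℕ → Prop) := ⟨fun _ _ h => h.symm⟩
  rw [blockUnion, Finset.sup_eq_biUnion, Finset.card_biUnion, List.sum_toFinset _ h.nodup]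
  · rfl
  · intro B hB C hC hne
    exact h.pairwise_disjoint.forall (List.mem_toFinset.1 hB) (List.mem_toFinset.1 hC) hne

end IsNCBlockList

theorem blockUnion_split {L₁ L₂ : List (Finset ℕ)} {b : ℕ}
    (h₁ : ∀ B ∈ L₁, ∀ x ∈ B, x < b) (h₂ : ∀ B ∈ L₂, ∀ x ∈ B, b < x) :
    blockUnion L₁ = (blockUnion (L₁ ++ L₂)).filter (· < b) ∧
      blockUnion L₂ = (blockUnion (L₁ ++ L₂)).filter (b < ·) := by
  constructor <;> ext x <;> simp only [Finset.mem_filter, mem_blockUnion, List.mem_append]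
  · exact ⟨fun ⟨B, hB, hx⟩ => ⟨⟨B, Or.inl hB, hx⟩, h₁ B hB x hx⟩,
      fun ⟨⟨B, hB, hx⟩, hxb⟩ => ⟨B, hB.resolve_right fun hB => (h₂ B hB x hx).not_gt hxb, hx⟩⟩
  · exact ⟨fun ⟨B, hB, hx⟩ => ⟨⟨B, Or.inr hB, hx⟩, h₂ B hB x hx⟩,
      fun ⟨⟨B, hB, hx⟩, hxb⟩ => ⟨B, hB.resolve_left fun hB => (h₁ B hB x hx).not_gt hxb, hx⟩⟩

def consNonempty (H : Finset ℕ) (L : List (Finset ℕ)) : List (Finset ℕ) :=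
  if H = ∅ then L else H :: L

theorem blockUnion_consNonempty (H : Finset ℕ) (L : List (Finset ℕ)) :
    blockUnion (consNonempty H L) = H ∪ blockUnion L := by
  unfold consNonempty; split_ifs with h <;> simp [h, blockUnion_cons]

theorem consNonempty_append (H : Finset ℕ) (L₁ L₂ : List (Finset ℕ)) :
    consNonempty H L₁ ++ L₂ = consNonempty H (L₁ ++ L₂) := by
  unfold consNonempty; split_ifs <;> rfl

theorem consNonempty_sublist (H : Finset ℕ) (L : List (Finset ℕ)) :
    L.Sublist (consNonempty H L) := by
  unfold consNonempty; split_ifs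
  exacts [List.Sublist.refl L, List.sublist_cons_self H L]

theorem consNonempty_injective {H H' : Finset ℕ} {L L' : List (Finset ℕ)} {a : ℕ}
    (hH : H.Nonempty → a ∈ H) (hH' : H'.Nonempty → a ∈ H') (hL : ∀ B ∈ L, a ∉ B)
    (hL' : ∀ B ∈ L', a ∉ B) (h : consNonempty H L = consNonempty H' L') : H = H' ∧ L = L' := by
  unfold consNonempty at h
  rcases H.eq_empty_or_nonempty with rfl | hne <;>
    rcases H'.eq_empty_or_nonempty with rfl | hne'
  · simpa using h
  · simp only [if_pos, hne'.ne_empty, if_false] at h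
    exact absurd (hH' hne') (hL H' (h ▸ List.mem_cons_self))
  · simp only [if_pos, hne.ne_empty, if_false] at h
    exact absurd (hH hne) (hL' H (h ▸ List.mem_cons_self))
  · simpa [hne.ne_empty, hne'.ne_empty] using h

theorem Refines.cons_consNonempty {v : List ℕ} {H : Finset ℕ} {L : List (Finset ℕ)} (m : ℕ)
    (h : Refines v ((consNonempty H L).map Finset.card)) :
    Refines (m :: v) ((m + H.card) :: L.map Finset.card) := by
  unfold consNonempty at h
  split_ifs at h with hH
  · simpa [hH] using h.cons m
  · exact h.cons_add m

theorem mem_consNonempty {H C : Finset ℕ} {L : List (Finset ℕ)} (hC : C ∈ consNonempty H L) :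
    C = H ∨ C ∈ L := by
  unfold consNonempty at hC; split_ifs at hC
  exacts [Or.inr hC, List.mem_cons.1 hC]

theorem IsNCBlockList.consNonempty {H : Finset ℕ} {L : List (Finset ℕ)}
    (hH : H.Nonempty → ∀ C ∈ L, Precedes H C) (hL : IsNCBlockList L) :
    IsNCBlockList (consNonempty H L) := by
  unfold _root_.consNonempty; split_ifs with h
  · exact hL
  · exact .cons (Finset.nonempty_iff_ne_empty.2 h) (hH (Finset.nonempty_iff_ne_empty.2 h)) hL

theorem refines_consNonempty {v₁ v₂ : List ℕ} {H : Finset ℕ} {L : List (Finset ℕ)}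
    (hv₁ : ∀ x ∈ v₁, 0 < x) (hH : H.card = v₁.sum) (h : Refines v₂ (L.map Finset.card)) :
    Refines (v₁ ++ v₂) ((consNonempty H L).map Finset.card) := by
  unfold consNonempty; split_ifs with hH0
  · obtain rfl : v₁ = [] := by
      cases v₁ with
      | nil => rfl
      | cons x v => have := hv₁ x List.mem_cons_self; simp [hH0] at hH; omega
    exact h
  · have hv : v₁ ≠ [] := by rintro rfl; simp_all
    simpa [hH] using (Refines.singleton hv).append h

def offsets : ℕ → List ℕ → List ℕ
  | _, [] => []
  | o, m :: ms => o :: offsets (o + m) ms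

theorem offsets_cons (o m : ℕ) (ms : List ℕ) : offsets o (m :: ms) = o :: offsets (o + m) ms := rfl

theorem length_offsets (o : ℕ) (ms : List ℕ) : (offsets o ms).length = ms.length := by
  induction ms generalizing o <;> simp [offsets, *]

theorem le_of_mem_offsets {o b : ℕ} {ms : List ℕ} (hb : b ∈ offsets o ms) : o ≤ b := by
  induction ms generalizing o with
  | nil => simp [offsets] at hb
  | cons m ms ih =>
    rcases List.mem_cons.1 hb with rfl | hb
    exacts [le_rfl, (Nat.le_add_right o m).trans (ih hb)]

theorem mem_offsets_bounds {o b : ℕ} {ms : List ℕ} (hpos : ∀ m ∈ ms, 0 < m)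
    (hb : b ∈ offsets o ms) : o ≤ b ∧ b < o + ms.sum := by
  induction ms generalizing o with
  | nil => simp [offsets] at hb
  | cons m ms ih =>
    simp only [List.forall_mem_cons] at hpos
    rcases List.mem_cons.1 hb with rfl | hb
    · simp; omega
    · have := ih hpos.2 hb; simp; omega

theorem pairwise_lt_offsets {o : ℕ} {ms : List ℕ} (hpos : ∀ m ∈ ms, 0 < m) :
    (offsets o ms).Pairwise (· < ·) := by
  induction ms generalizing o with
  | nil => exact .nil
  | cons m ms ih =>
    simp only [List.forall_mem_cons] at hpos
    exact .cons (fun b hb => by have := mem_offsets_bounds hpos.2 hb; omega) (ih hpos.2)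

theorem offsets_injective : ∀ {o : ℕ} {ms ms' : List ℕ}, offsets o ms = offsets o ms' →
    ms.sum = ms'.sum → ms = ms'
  | _, [], [], _, _ => rfl
  | _, [], _ :: _, h, _ => by simp [offsets] at h
  | _, _ :: _, [], h, _ => by simp [offsets] at h
  | o, m :: ms, m' :: ms', h, hsum => by
    obtain ⟨-, h⟩ := List.cons_eq_cons.1 h
    obtain rfl : m = m' := by
      cases ms <;> cases ms' <;> simp_all [offsets]
    simp only [List.sum_cons, Nat.add_left_cancel_iff] at hsum
    rw [offsets_injective h hsum]

theorem exists_offsets_eq {o top : ℕ} {bs : List ℕ} (hbs : (o :: bs).Pairwise (· < ·))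
    (htop : ∀ b ∈ o :: bs, b < top) :
    ∃ ms, offsets o ms = o :: bs ∧ o + ms.sum = top ∧ ∀ m ∈ ms, 0 < m := by
  induction bs generalizing o with
  | nil => exact ⟨[top - o], rfl, by have := htop o (by simp); simp; omega,
      by have := htop o (by simp); simp; omega⟩
  | cons b bs ih =>
    have hob : o < b := List.rel_of_pairwise_cons hbs List.mem_cons_self
    obtain ⟨ms, h₁, h₂, h₃⟩ := ih (List.pairwise_cons.1 hbs).2 fun x hx => htop x (by simp_all)
    refine ⟨(b - o) :: ms, ?_, ?_, ?_⟩
    · rw [offsets_cons, Nat.add_sub_cancel' hob.le, h₁]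
    · simp; omega
    · simpa [hob] using h₃

/- `IsTreeFamily s o L` collects the properties of the blocks `L` of an `s`-tree whose leaves are
numbered from `o + 1`, and `IsForestFamily ms t o L` those of the blocks of a forest of trees
with `ms` leaves each and concatenated signature `t`; the gaps `offsets o ms` separate its trees
(the first one, `o`, is the gap to the left of the forest). -/
structure IsTreeFamily (s : List ℕ) (o : ℕ) (L : List (Finset ℕ)) : Prop where
  two_le : ∀ x ∈ s, 2 ≤ x
  nc : IsNCBlockList L
  blockUnion_eq : blockUnion L = Finset.Ioc o (o + (s.map (· - 1)).sum)
  refines : Refines (s.map (· - 1)) (L.map Finset.card)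

structure IsForestFamily (ms t : List ℕ) (o : ℕ) (L : List (Finset ℕ)) : Prop where
  pos : ∀ m ∈ ms, 0 < m
  two_le : ∀ x ∈ t, 2 ≤ x
  nc : IsNCBlockList L
  blockUnion_eq : blockUnion L = Finset.Ico o (o + ms.sum) \ (offsets o ms).toFinset
  oneSided : ∀ B ∈ L, ∀ b ∈ offsets o ms, OneSided B b
  refines : Refines (t.map (· - 1)) (L.map Finset.card)

/-! ### The blocks of a tree -/

namespace PTree

theorem ind {P : PTree → Prop} (h : ∀ ts, (∀ t ∈ ts, P t) → P (node ts)) : ∀ T, P T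
  | node ts => h ts fun t _ => ind h t
decreasing_by
  have := List.sizeOf_lt_of_mem ‹t ∈ ts›
  simp
  omega

def leaves : PTree → ℕ
  | node [] => 1
  | node (t :: ts) => ((t :: ts).attach.map fun x => leaves x.1).sum
decreasing_by
  have := List.sizeOf_lt_of_mem x.2
  simp at this ⊢
  omega

theorem leaves_cons (t : PTree) (ts : List PTree) :
    (node (t :: ts)).leaves = t.leaves + (ts.map leaves).sum := by
  rw [leaves]
  simp

theorem signature_cons (t : PTree) (ts : List PTree) :
    (node (t :: ts)).signature =
      (ts.length + 1) :: (t.signature ++ (ts.map signature).flatten) := by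
  rw [signature]
  simp

theorem leaves_pos (T : PTree) : 0 < T.leaves := by
  induction T using ind with
  | h ts ih =>
    cases ts with
    | nil => simp [leaves]
    | cons t ts =>
      have := ih t List.mem_cons_self
      rw [leaves_cons]
      omega

theorem leaves_map_pos (ts : List PTree) : ∀ m ∈ ts.map leaves, 0 < m := by
  simpa using fun t _ => leaves_pos t

theorem leaves_eq (T : PTree) : T.leaves = (T.signature.map (· - 1)).sum + 1 := by
  induction T using ind with
  | h ts ih =>
    obtain _ | ⟨c, cs⟩ := ts
    · simp [leaves, signature]
    · have hcs :
          (cs.map leaves).sum = ((cs.map signature).flatten.map (· - 1)).sum + cs.length := by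
        rw [List.map_congr_left fun t ht => ih t (List.mem_cons_of_mem _ ht)]
        simp [List.sum_map_add, List.map_flatten, List.sum_flatten, Function.comp_def]
      rw [leaves_cons, signature_cons, ih c List.mem_cons_self, hcs]
      simp
      omega

theorem two_le_signature_cons_iff {c : PTree} {cs : List PTree} :
    (∀ x ∈ (node (c :: cs)).signature, 2 ≤ x) ↔
      cs ≠ [] ∧ ∀ t ∈ c :: cs, ∀ x ∈ t.signature, 2 ≤ x := by
  simp only [signature_cons, List.mem_cons, List.mem_append, List.mem_flatten, List.mem_map]
  constructor
  · intro h
    refine ⟨fun hcs => by simpa [hcs] using h _ (Or.inl rfl), fun t ht x hx => h x (Or.inr ?_)⟩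
    rcases ht with rfl | ht
    exacts [Or.inl hx, Or.inr ⟨_, ⟨t, ht, rfl⟩, hx⟩]
  · rintro ⟨hcs, h⟩ x (rfl | hx | ⟨_, ⟨t, ht, rfl⟩, hx⟩)
    · have := List.length_pos_iff.2 hcs; omega
    · exact h c (Or.inl rfl) x hx
    · exact h t (Or.inr ht) x hx

/- Leaves are numbered from `o + 1` and the gap between leaves `x` and `x + 1` is called `x`.
The gaps separating consecutive children of a node go to the block of the maximal chain of
first children through that node: `chainBlock` is the block of the chain starting at the root
(empty for a leaf) and `otherBlocks` lists all the other blocks. -/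
mutual
def chainBlock : PTree → ℕ → Finset ℕ
  | node [], _ => ∅
  | node (c :: cs), o => (offsets (o + c.leaves) (cs.map leaves)).toFinset ∪ chainBlock c o
def otherBlocks : PTree → ℕ → List (Finset ℕ)
  | node [], _ => []
  | node (c :: cs), o => otherBlocks c o ++ forestBlocks cs (o + c.leaves)
def forestBlocks : List PTree → ℕ → List (Finset ℕ)
  | [], _ => []
  | t :: ts, o => consNonempty (chainBlock t o) (otherBlocks t o) ++ forestBlocks ts (o + t.leaves)
end

def blocks (T : PTree) (o : ℕ) : List (Finset ℕ) := consNonempty (T.chainBlock o) (T.otherBlocks o)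

theorem forestBlocks_cons (t : PTree) (ts : List PTree) (o : ℕ) :
    forestBlocks (t :: ts) o = t.blocks o ++ forestBlocks ts (o + t.leaves) := by
  rw [forestBlocks, blocks]

theorem chainBlock_cons (c : PTree) (cs : List PTree) (o : ℕ) :
    (node (c :: cs)).chainBlock o =
      (offsets (o + c.leaves) (cs.map leaves)).toFinset ∪ c.chainBlock o := by
  rw [chainBlock]

theorem otherBlocks_cons (c : PTree) (cs : List PTree) (o : ℕ) :
    (node (c :: cs)).otherBlocks o = c.otherBlocks o ++ forestBlocks cs (o + c.leaves) := by
  rw [otherBlocks]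

theorem blocks_leaf (o : ℕ) : (node []).blocks o = [] := by
  simp [blocks, consNonempty, chainBlock, otherBlocks]

theorem blockUnion_forestBlocks {ts : List PTree}
    (h : ∀ t ∈ ts, ∀ o, blockUnion (t.blocks o) = Finset.Ioo o (o + t.leaves)) (o : ℕ) :
    blockUnion (forestBlocks ts o) =
      Finset.Ico o (o + (ts.map leaves).sum) \ (offsets o (ts.map leaves)).toFinset := by
  induction ts generalizing o with
  | nil => simp [forestBlocks, blockUnion_nil]
  | cons t ts ih =>
    rw [forestBlocks_cons, blockUnion_append, h t List.mem_cons_self,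
      ih fun t' ht' => h t' (List.mem_cons_of_mem _ ht')]
    have := leaves_pos t
    ext x
    by_cases hm : x ∈ offsets (o + t.leaves) (ts.map leaves)
    · have := le_of_mem_offsets hm
      simp [offsets_cons, hm]
      omega
    · simp [offsets_cons, hm]
      omega

theorem blockUnion_blocks (T : PTree) (o : ℕ) :
    blockUnion (T.blocks o) = Finset.Ioo o (o + T.leaves) := by
  induction T using ind generalizing o with
  | h ts ih =>
    cases ts with
    | nil => ext x; simp [blocks_leaf, leaves, blockUnion_nil]
    | cons c cs =>
      have hc := Finset.ext_iff.1 (ih c List.mem_cons_self o)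
      have hF := blockUnion_forestBlocks (fun t ht => ih t (List.mem_cons_of_mem _ ht))
        (o + c.leaves)
      rw [blocks, blockUnion_consNonempty] at hc
      rw [blocks, blockUnion_consNonempty, chainBlock_cons, otherBlocks_cons, blockUnion_append,
        hF, leaves_cons]
      have := leaves_pos c
      ext x
      have hcx := hc x
      simp only [Finset.mem_union, Finset.mem_Ioo] at hcx
      by_cases hm : x ∈ offsets (o + c.leaves) (cs.map leaves)
      · have := mem_offsets_bounds (leaves_map_pos cs) hm
        simp [hm]
        omega
      · simp only [Finset.mem_union, Finset.mem_sdiff, Finset.mem_Ico, Finset.mem_Ioo,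
          List.mem_toFinset, hm, false_or, not_false_eq_true, and_true, ← or_assoc, hcx]
        omega

theorem mem_blocks_bounds {T : PTree} {o : ℕ} {B : Finset ℕ} (hB : B ∈ T.blocks o) {x : ℕ}
    (hx : x ∈ B) : o < x ∧ x < o + T.leaves := by
  simpa [blockUnion_blocks] using subset_blockUnion hB hx

theorem chainBlock_subset (T : PTree) (o : ℕ) : T.chainBlock o ⊆ Finset.Ioo o (o + T.leaves) := by
  rw [← blockUnion_blocks, blocks, blockUnion_consNonempty]
  exact Finset.subset_union_left

theorem mem_forestBlocks_bounds {ts : List PTree} {o : ℕ} {B : Finset ℕ}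
    (hB : B ∈ forestBlocks ts o) {x : ℕ} (hx : x ∈ B) :
    o < x ∧ x < o + (ts.map leaves).sum ∧ x ∉ offsets o (ts.map leaves) := by
  have := subset_blockUnion hB hx
  rw [blockUnion_forestBlocks fun t _ => blockUnion_blocks t] at this
  cases ts with
  | nil => simp at this
  | cons t ts =>
    simp only [List.map_cons, offsets_cons, Finset.mem_sdiff, Finset.mem_Ico, List.mem_toFinset,
      List.mem_cons, not_or] at this
    exact ⟨lt_of_le_of_ne this.1.1 (Ne.symm this.2.1), this.1.2, by simp [offsets_cons, this.2]⟩

theorem oneSided_forestBlocks (ts : List PTree) (o : ℕ) :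
    ∀ B ∈ forestBlocks ts o, ∀ b ∈ offsets o (ts.map leaves), OneSided B b := by
  induction ts generalizing o with
  | nil => simp [forestBlocks]
  | cons t ts ih =>
    intro B hB b hb
    rw [List.map_cons, offsets_cons] at hb
    rw [forestBlocks_cons] at hB
    rcases List.mem_append.1 hB with hB | hB
    · rcases List.mem_cons.1 hb with rfl | hb
      · exact Or.inr fun x hx => (mem_blocks_bounds hB hx).1
      · exact Or.inl fun x hx => (mem_blocks_bounds hB hx).2.trans_le (le_of_mem_offsets hb)
    · rcases List.mem_cons.1 hb with rfl | hb
      · exact Or.inr fun x hx => by have := (mem_forestBlocks_bounds hB hx).1; omega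
      · exact ih _ B hB b hb

theorem succ_mem_chainBlock {T : PTree} (hT : ∀ x ∈ T.signature, 2 ≤ x) (hleaf : T ≠ node [])
    (o : ℕ) : o + 1 ∈ T.chainBlock o := by
  induction T using ind generalizing o with
  | h ts ih =>
    obtain _ | ⟨c, cs⟩ := ts
    · exact absurd rfl hleaf
    obtain ⟨hcs, hsig⟩ := two_le_signature_cons_iff.1 hT
    rw [chainBlock_cons, Finset.mem_union]
    by_cases hc : c = node []
    · obtain ⟨t, cs, rfl⟩ := List.exists_cons_of_ne_nil hcs
      subst hc
      left
      simp [leaves, offsets_cons]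
    · exact Or.inr (ih c List.mem_cons_self (hsig c List.mem_cons_self) hc o)

theorem succ_mem_chainBlock_of_nonempty {T : PTree} (hT : ∀ x ∈ T.signature, 2 ≤ x) {o : ℕ}
    (hne : (T.chainBlock o).Nonempty) : o + 1 ∈ T.chainBlock o := by
  rcases eq_or_ne T (node []) with rfl | hleaf
  · simp [chainBlock] at hne
  · exact succ_mem_chainBlock hT hleaf o

theorem blocks_eq_cons {T : PTree} (hT : ∀ x ∈ T.signature, 2 ≤ x) (hleaf : T ≠ node [])
    (o : ℕ) : T.blocks o = T.chainBlock o :: T.otherBlocks o := by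
  rw [blocks, consNonempty, if_neg (Finset.ne_empty_of_mem (succ_mem_chainBlock hT hleaf o))]

theorem card_offsets_toFinset (o : ℕ) (ts : List PTree) :
    (offsets o (ts.map leaves)).toFinset.card = ts.length := by
  rw [List.toFinset_card_of_nodup (pairwise_lt_offsets (leaves_map_pos ts)).nodup,
    length_offsets, List.length_map]

theorem refines_forestBlocks {ts : List PTree}
    (h : ∀ t ∈ ts, ∀ o, Refines (t.signature.map (· - 1)) ((t.blocks o).map Finset.card))
    (o : ℕ) :
    Refines (((ts.map signature).flatten).map (· - 1)) ((forestBlocks ts o).map Finset.card) := by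
  induction ts generalizing o with
  | nil => exact Refines.nil
  | cons t ts ih =>
    rw [forestBlocks_cons]
    simpa using (h t List.mem_cons_self o).append
      (ih (fun t' ht' => h t' (List.mem_cons_of_mem _ ht')) _)

theorem refines_blocks {T : PTree} (hT : ∀ x ∈ T.signature, 2 ≤ x) (o : ℕ) :
    Refines (T.signature.map (· - 1)) ((T.blocks o).map Finset.card) := by
  induction T using ind generalizing o with
  | h ts ih =>
    obtain _ | ⟨c, cs⟩ := ts
    · simpa [blocks_leaf, signature] using Refines.nil
    obtain ⟨hcs, hsig⟩ := two_le_signature_cons_iff.1 hT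
    have hc := (ih c List.mem_cons_self (hsig c List.mem_cons_self) o).cons_consNonempty cs.length
    have hF := refines_forestBlocks (ts := cs)
      (fun t ht => ih t (List.mem_cons_of_mem _ ht) (hsig t (List.mem_cons_of_mem _ ht)))
      (o + c.leaves)
    have hdisj : Disjoint (offsets (o + c.leaves) (cs.map leaves)).toFinset (c.chainBlock o) :=
      Finset.disjoint_right.2 fun x hx hxA => by
        have := le_of_mem_offsets (List.mem_toFinset.1 hxA)
        have := Finset.mem_Ioo.1 (chainBlock_subset c o hx)
        omega
    rw [blocks_eq_cons hT (by simp) o, chainBlock_cons, otherBlocks_cons, signature_cons]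
    simpa [Finset.card_union_of_disjoint hdisj, card_offsets_toFinset] using hc.append hF

theorem isNCBlockList_forestBlocks {ts : List PTree} (h : ∀ t ∈ ts, ∀ o, IsNCBlockList (t.blocks o))
    (o : ℕ) : IsNCBlockList (forestBlocks ts o) := by
  induction ts generalizing o with
  | nil => exact IsNCBlockList.nil
  | cons t ts ih =>
    rw [forestBlocks_cons]
    refine (h t List.mem_cons_self o).append
      (ih (fun t' ht' => h t' (List.mem_cons_of_mem _ ht')) _)
      fun B hB C hC b hb x hx => ?_
    have := (mem_blocks_bounds hB hb).2
    have := (mem_forestBlocks_bounds hC hx).1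
    omega

theorem isNCBlockList_blocks {T : PTree} (hT : ∀ x ∈ T.signature, 2 ≤ x) (o : ℕ) :
    IsNCBlockList (T.blocks o) := by
  induction T using ind generalizing o with
  | h ts ih =>
    obtain _ | ⟨c, cs⟩ := ts
    · simpa [blocks_leaf] using IsNCBlockList.nil
    obtain ⟨-, hsig⟩ := two_le_signature_cons_iff.1 hT
    have hc := ih c List.mem_cons_self (hsig c List.mem_cons_self) o
    have hF := isNCBlockList_forestBlocks (ts := cs)
      (fun t ht => ih t (List.mem_cons_of_mem _ ht) (hsig t (List.mem_cons_of_mem _ ht)))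
      (o + c.leaves)
    have hhead := succ_mem_chainBlock hT (by simp) o
    have hother : ∀ C ∈ c.otherBlocks o, C ∈ c.blocks o :=
      fun C hC => (consNonempty_sublist _ _).subset hC
    rw [chainBlock_cons] at hhead
    rw [blocks_eq_cons hT (by simp) o, chainBlock_cons, otherBlocks_cons]
    refine .cons ⟨o + 1, hhead⟩ (fun C hC => ?_)
      ((hc.sublist (consNonempty_sublist _ _)).append hF fun B hB C hC b hb x hx => ?_)
    · rcases List.mem_append.1 hC with hC | hC
      · have hcleaf : c ≠ node [] := by rintro rfl; simp [otherBlocks] at hC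
        have hpre := hc.pairwise
        rw [blocks_eq_cons (hsig c List.mem_cons_self) hcleaf] at hpre
        refine (List.rel_of_pairwise_cons hpre hC).union_left fun a ha x hx => ?_
        have := le_of_mem_offsets (List.mem_toFinset.1 ha)
        have := (mem_blocks_bounds (hother C hC) hx).2
        omega
      · refine precedes_of_mem hhead (fun x hx => ?_) fun b hb => ?_
        · have := (mem_forestBlocks_bounds hC hx).1
          have := leaves_pos c
          omega
        · rcases Finset.mem_union.1 hb with hb | hb
          · exact oneSided_forestBlocks cs _ C hC b (List.mem_toFinset.1 hb)
          · refine Or.inr fun x hx => ?_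
            have := (mem_forestBlocks_bounds hC hx).1
            have := (Finset.mem_Ioo.1 (chainBlock_subset c o hb)).2
            omega
    · have := (mem_blocks_bounds (hother B hB) hb).2
      have := (mem_forestBlocks_bounds hC hx).1
      omega

theorem succ_notMem_of_mem_otherBlocks {T : PTree} (hT : ∀ x ∈ T.signature, 2 ≤ x) {o : ℕ}
    {C : Finset ℕ} (hC : C ∈ T.otherBlocks o) : o + 1 ∉ C := by
  rcases eq_or_ne T (node []) with rfl | hleaf
  · simp [otherBlocks] at hC
  have hpre := (isNCBlockList_blocks hT o).pairwise
  rw [blocks_eq_cons hT hleaf] at hpre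
  exact Finset.disjoint_left.1 (List.rel_of_pairwise_cons hpre hC).disjoint
    (succ_mem_chainBlock hT hleaf o)

theorem isTreeFamily_blocks {T : PTree} (hT : ∀ x ∈ T.signature, 2 ≤ x) (o : ℕ) :
    IsTreeFamily T.signature o (T.blocks o) where
  two_le := hT
  nc := isNCBlockList_blocks hT o
  blockUnion_eq := by
    rw [blockUnion_blocks, leaves_eq]
    ext x
    simp only [Finset.mem_Ioo, Finset.mem_Ioc]
    omega
  refines := refines_blocks hT o

theorem isForestFamily_forestBlocks {ts : List PTree}
    (hts : ∀ t ∈ ts, ∀ x ∈ t.signature, 2 ≤ x) (o : ℕ) :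
    IsForestFamily (ts.map leaves) (ts.map signature).flatten o (forestBlocks ts o) where
  pos := leaves_map_pos ts
  two_le := by
    simp only [List.mem_flatten, List.mem_map]
    rintro x ⟨_, ⟨t, ht, rfl⟩, hx⟩
    exact hts t ht x hx
  nc := isNCBlockList_forestBlocks (fun t ht => isNCBlockList_blocks (hts t ht)) o
  blockUnion_eq := blockUnion_forestBlocks (fun t _ => blockUnion_blocks t) o
  oneSided := oneSided_forestBlocks ts o
  refines := refines_forestBlocks (fun t ht => refines_blocks (hts t ht)) o

theorem blocks_eq_of_forestBlocks_cons_eq_append {c : PTree} {cs : List PTree}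
    (hcs : ∀ t ∈ cs, ∀ x ∈ t.signature, 2 ≤ x) {o : ℕ} {L₁ L₂ : List (Finset ℕ)}
    (h : forestBlocks (c :: cs) o = L₁ ++ L₂) (h₁ : ∀ B ∈ L₁, ∀ x ∈ B, x < o + c.leaves)
    (h₂ : ∀ B ∈ L₂, B.Nonempty ∧ ∀ x ∈ B, o + c.leaves < x) :
    c.blocks o = L₁ ∧ forestBlocks cs (o + c.leaves) = L₂ := by
  rw [forestBlocks_cons] at h
  refine List.eq_of_append_eq_of_forall (p := fun B => ∀ x ∈ B, x < o + c.leaves) h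
    (fun B hB x hx => (mem_blocks_bounds hB hx).2) h₁ (fun B hB hp => ?_)
    fun B hB hp => ?_
  · obtain ⟨x, hx⟩ := (isForestFamily_forestBlocks hcs _).nc.nonempty B hB
    exact absurd (hp x hx) (mem_forestBlocks_bounds hB hx).1.not_gt
  · obtain ⟨⟨x, hx⟩, hlt⟩ := h₂ B hB
    exact absurd (hp x hx) (hlt x hx).not_gt

/- Here `l` lists the gaps between the children of the root, which are the largest elements of
the root block, and `H` is the chain block of the first child. -/
theorem blocks_node_eq_cons_iff {c : PTree} {cs : List PTree}
    (hT : ∀ x ∈ (node (c :: cs)).signature, 2 ≤ x) {o : ℕ} {l : List ℕ} {H : Finset ℕ}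
    {L : List (Finset ℕ)} (hl : l.Pairwise (· < ·)) (hlen : l.length = cs.length)
    (hlt : ∀ y ∈ H, ∀ a ∈ l, y < a) (hH : H.Nonempty → o + 1 ∈ H) (hL : ∀ C ∈ L, o + 1 ∉ C) :
    (node (c :: cs)).blocks o = (l.toFinset ∪ H) :: L ↔
      offsets o ((c :: cs).map leaves) = o :: l ∧ forestBlocks (c :: cs) o = consNonempty H L := by
  obtain ⟨-, hsig⟩ := two_le_signature_cons_iff.1 hT
  have hc := hsig c List.mem_cons_self
  have hother : ∀ C ∈ c.otherBlocks o ++ forestBlocks cs (o + c.leaves), o + 1 ∉ C := by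
    intro C hC hC'
    rcases List.mem_append.1 hC with hC | hC
    · exact succ_notMem_of_mem_otherBlocks hc hC hC'
    · have := (mem_forestBlocks_bounds hC hC').1
      have := leaves_pos c
      omega
  have hchain : ∀ y ∈ c.chainBlock o, ∀ a ∈ (offsets (o + c.leaves) (cs.map leaves)).toFinset,
      y < a := fun y hy a ha =>
    (Finset.mem_Ioo.1 (chainBlock_subset c o hy)).2.trans_le
      (le_of_mem_offsets (List.mem_toFinset.1 ha))
  rw [blocks_eq_cons hT (by simp), chainBlock_cons, otherBlocks_cons, forestBlocks_cons, blocks,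
    consNonempty_append, List.map_cons, offsets_cons, List.cons.injEq, List.cons.injEq]
  simp only [true_and]
  constructor
  · rintro ⟨hB, rfl⟩
    obtain ⟨hA, rfl⟩ := Finset.eq_of_union_eq_of_lt hB hchain
      (fun y hy a ha => hlt y hy a (List.mem_toFinset.1 ha))
      (by rw [card_offsets_toFinset, List.toFinset_card_of_nodup hl.nodup, hlen])
    refine ⟨(pairwise_lt_offsets (leaves_map_pos cs)).eq_of_mem_iff hl fun a => ?_, rfl⟩
    simpa using Finset.ext_iff.1 hA a
  · rintro ⟨hA, hF⟩
    obtain ⟨rfl, rfl⟩ := consNonempty_injective (succ_mem_chainBlock_of_nonempty hc) hH hother hL hF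
    exact ⟨by rw [hA], rfl⟩

end PTree

/-! ### Recovering a tree from its blocks -/

namespace IsForestFamily

variable {m : ℕ} {ms t : List ℕ} {o : ℕ} {L : List (Finset ℕ)}

theorem mem_blockUnion_iff (h : IsForestFamily (m :: ms) t o L) {x : ℕ} :
    x ∈ blockUnion L ↔ o < x ∧ x < o + (m + ms.sum) ∧ x ∉ offsets (o + m) ms := by
  rw [h.blockUnion_eq]
  by_cases hx : x ∈ offsets (o + m) ms
  · simp [offsets_cons, hx]
  · simp [offsets_cons, hx]
    omega

theorem oneSided_first (h : IsForestFamily (m :: ms) t o L) : ∀ B ∈ L, OneSided B (o + m) := by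
  cases ms with
  | nil =>
    refine fun B hB => Or.inl fun x hx => ?_
    have := h.mem_blockUnion_iff.1 (subset_blockUnion hB hx)
    simp at this
    omega
  | cons m' ms => exact fun B hB => h.oneSided B hB _ (by simp [offsets_cons])

theorem blockUnion_left {L₁ L₂ : List (Finset ℕ)} (h : IsForestFamily (m :: ms) t o (L₁ ++ L₂))
    (hlt₁ : ∀ B ∈ L₁, ∀ x ∈ B, x < o + m) (hlt₂ : ∀ B ∈ L₂, ∀ x ∈ B, o + m < x) :
    blockUnion L₁ = Finset.Ioo o (o + m) := by
  rw [(blockUnion_split hlt₁ hlt₂).1]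
  ext x
  simp only [Finset.mem_filter, h.mem_blockUnion_iff, Finset.mem_Ioo]
  by_cases hx : x ∈ offsets (o + m) ms
  · have := le_of_mem_offsets hx
    simp [hx]
    omega
  · simp [hx]
    omega

theorem blockUnion_right {L₁ L₂ : List (Finset ℕ)} (h : IsForestFamily (m :: ms) t o (L₁ ++ L₂))
    (hlt₁ : ∀ B ∈ L₁, ∀ x ∈ B, x < o + m) (hlt₂ : ∀ B ∈ L₂, ∀ x ∈ B, o + m < x) :
    blockUnion L₂ = Finset.Ico (o + m) (o + m + ms.sum) \ (offsets (o + m) ms).toFinset := by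
  rw [(blockUnion_split hlt₁ hlt₂).2]
  ext x
  simp only [Finset.mem_filter, Finset.mem_sdiff, Finset.mem_Ico, List.mem_toFinset,
    h.mem_blockUnion_iff]
  by_cases hx : x ∈ offsets (o + m) ms
  · simp [hx]
  · have hne : x < o + m + ms.sum → x ≠ o + m := by
      rintro hlt rfl
      cases ms with
      | nil => simp at hlt
      | cons => exact hx (by simp [offsets_cons])
    simp only [hx, not_false_eq_true, and_true]
    constructor
    · intro h'
      omega
    · intro h'
      have := hne h'.2
      omega

theorem exists_split (h : IsForestFamily (m :: ms) t o L) :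
    ∃ L₁ L₂ t₁ t₂, L = L₁ ++ L₂ ∧ t = t₁ ++ t₂ ∧ (t₁.map (· - 1)).sum + 1 = m ∧
      IsTreeFamily t₁ o L₁ ∧ IsForestFamily ms t₂ (o + m) L₂ ∧
      (∀ B ∈ L₁, ∀ x ∈ B, x < o + m) ∧ ∀ B ∈ L₂, ∀ x ∈ B, o + m < x := by
  obtain ⟨L₁, L₂, rfl, hlt₁, hlt₂⟩ := h.nc.exists_split h.oneSided_first
  obtain ⟨v₁, v₂, hv, hr₁, hr₂⟩ := Refines.exists_of_eq_append (by simpa using h.refines)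
  obtain ⟨t₁, t₂, rfl, rfl, rfl⟩ := List.map_eq_append_iff.1 hv
  have hnc₁ := h.nc.sublist (List.sublist_append_left L₁ L₂)
  have hU₁ := h.blockUnion_left hlt₁ hlt₂
  have hgaps : (t₁.map (· - 1)).sum + 1 = m := by
    have := hnc₁.card_blockUnion
    rw [hU₁, Nat.card_Ioo, ← hr₁.sum_eq] at this
    have := h.pos m List.mem_cons_self
    omega
  refine ⟨L₁, L₂, t₁, t₂, rfl, rfl, hgaps,
    ⟨fun x hx => h.two_le x (by simp [hx]), hnc₁, ?_, hr₁⟩,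
    ⟨fun m' hm' => h.pos m' (by simp [hm']), fun x hx => h.two_le x (by simp [hx]),
      h.nc.sublist (List.sublist_append_right L₁ L₂), h.blockUnion_right hlt₁ hlt₂,
      fun B hB b hb => h.oneSided B (by simp [hB]) b (by simp [offsets_cons, hb]), hr₂⟩,
    hlt₁, hlt₂⟩
  rw [hU₁]
  ext x
  simp only [Finset.mem_Ioo, Finset.mem_Ioc]
  omega

open PTree in
theorem existsUnique
    (htree : ∀ {s o L}, s.length ≤ t.length → IsTreeFamily s o L →
      ∃! T : PTree, T.signature = s ∧ T.blocks o = L)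
    (h : IsForestFamily ms t o L) :
    ∃! ts : List PTree, ts.map leaves = ms ∧ (ts.map signature).flatten = t ∧
      forestBlocks ts o = L := by
  induction ms generalizing t o L with
  | nil =>
    obtain rfl : L = [] := h.nc.eq_nil (by simp [h.blockUnion_eq])
    obtain rfl : t = [] := List.map_eq_nil_iff.1 h.refines.eq_nil
    exact ⟨[], ⟨rfl, rfl, rfl⟩, fun ts hts => List.map_eq_nil_iff.1 hts.1⟩
  | cons m ms ih =>
    obtain ⟨L₁, L₂, t₁, t₂, rfl, rfl, hm, h₁, h₂, hlt₁, hlt₂⟩ := h.exists_split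
    obtain ⟨c, ⟨hcsig, hcbl⟩, hcuniq⟩ := htree (by simp) h₁
    obtain ⟨cs, ⟨hcsl, hcssig, hcsbl⟩, hcsuniq⟩ :=
      ih (fun hs h' => htree (by simp; omega) h') h₂
    have hcl : c.leaves = m := by rw [leaves_eq, hcsig, hm]
    refine ⟨c :: cs, ⟨by simp [hcl, hcsl], by simp [hcsig, hcssig], ?_⟩, ?_⟩
    · rw [forestBlocks_cons, hcbl, hcl, hcsbl]
    rintro (_ | ⟨c', cs'⟩) ⟨hl, hsig, hbl⟩
    · simp at hl
    simp only [List.map_cons, List.cons.injEq, List.flatten_cons] at hl hsig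
    obtain ⟨rfl, hl⟩ := hl
    have htwo : ∀ x ∈ c'.signature ++ (cs'.map signature).flatten, 2 ≤ x := hsig ▸ h.two_le
    obtain ⟨hbl₁, hbl₂⟩ := blocks_eq_of_forestBlocks_cons_eq_append (fun t ht x hx => htwo x
      (List.mem_append_right _ (List.mem_flatten.2 ⟨_, List.mem_map.2 ⟨t, ht, rfl⟩, hx⟩)))
      hbl hlt₁ fun B hB => ⟨h₂.nc.nonempty B hB, hlt₂ B hB⟩
    obtain ⟨hsig₁, hsig₂⟩ := List.eq_of_append_eq_of_sum_map_eq (f := (· - 1)) hsig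
      (fun x hx => by have := htwo x hx; omega) (by have := leaves_eq c'; omega)
    rw [hcuniq c' ⟨hsig₁, hbl₁⟩, hcsuniq cs' ⟨hl, hsig₂, hbl₂⟩]

end IsForestFamily

namespace IsTreeFamily

variable {k : ℕ} {t : List ℕ} {o : ℕ}

theorem bounds {s : List ℕ} {L : List (Finset ℕ)} (h : IsTreeFamily s o L) {C : Finset ℕ}
    (hC : C ∈ L) {x : ℕ} (hx : x ∈ C) : o < x ∧ x ≤ o + (s.map (· - 1)).sum := by
  simpa [h.blockUnion_eq] using subset_blockUnion hC hx

theorem exists_eq_cons {L : List (Finset ℕ)} (h : IsTreeFamily (k :: t) o L) :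
    ∃ B L', L = B :: L' ∧ o + 1 ∈ B := by
  have hk := h.two_le k List.mem_cons_self
  have ho : o + 1 ∈ blockUnion L := by
    rw [h.blockUnion_eq]
    simp
    omega
  obtain _ | ⟨B, L'⟩ := L
  · simp [blockUnion_nil] at ho
  exact ⟨B, L', rfl, h.nc.mem_head ho fun y hy => (mem_blockUnion.1 hy).elim
    fun C ⟨hC, hy⟩ => (h.bounds hC hy).1⟩

theorem sub_one_le_card {B : Finset ℕ} {L : List (Finset ℕ)}
    (h : IsTreeFamily (k :: t) o (B :: L)) : k - 1 ≤ B.card := by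
  obtain ⟨v₁, -, -, hB, -⟩ := Refines.exists_of_cons_cons (by simpa using h.refines)
  omega

/- In the following lemmas the root block is split into the gaps `l` between the children of the
root and the chain block `H` of the first child. -/

variable {l : List ℕ} {H : Finset ℕ} {L : List (Finset ℕ)}

theorem isNCBlockList_consNonempty_tail (h : IsTreeFamily (k :: t) o ((l.toFinset ∪ H) :: L))
    (hH : H.Nonempty → o + 1 ∈ H) (hL : ∀ C ∈ L, o + 1 ∉ C) :
    IsNCBlockList (consNonempty H L) := by
  refine .consNonempty (fun hne C hC => precedes_of_mem (hH hne) (fun x hx => ?_)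
    fun b hb => (List.rel_of_pairwise_cons h.nc.pairwise hC).2 b (Finset.mem_union_right _ hb))
    (h.nc.sublist (List.sublist_cons_self _ _))
  exact lt_of_le_of_ne (h.bounds (List.mem_cons_of_mem _ hC) hx).1 fun he => hL C hC (he ▸ hx)

theorem blockUnion_consNonempty_tail (h : IsTreeFamily (k :: t) o ((l.toFinset ∪ H) :: L))
    (hlt : ∀ y ∈ H, ∀ a ∈ l, y < a) :
    blockUnion (consNonempty H L) = Finset.Ioc o (o + ((k :: t).map (· - 1)).sum) \ l.toFinset := by
  have hU := h.blockUnion_eq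
  rw [blockUnion_cons] at hU
  rw [blockUnion_consNonempty, ← hU]
  ext x
  simp only [Finset.mem_union, Finset.mem_sdiff, List.mem_toFinset]
  constructor
  · rintro (hxH | hxL)
    · exact ⟨Or.inl (Or.inr hxH), fun hxl => lt_irrefl x (hlt x hxH x hxl)⟩
    · obtain ⟨C, hC, hxC⟩ := mem_blockUnion.1 hxL
      exact ⟨Or.inr hxL, fun hxl => Finset.disjoint_left.1
        (List.rel_of_pairwise_cons h.nc.pairwise hC).disjoint
        (Finset.mem_union_left _ (List.mem_toFinset.2 hxl)) hxC⟩
  · rintro ⟨(hx | hx) | hx, hxl⟩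
    exacts [absurd hx hxl, Or.inl hx, Or.inr hx]

theorem oneSided_consNonempty_tail (h : IsTreeFamily (k :: t) o ((l.toFinset ∪ H) :: L))
    (hlt : ∀ y ∈ H, ∀ a ∈ l, y < a) : ∀ C ∈ consNonempty H L, ∀ b ∈ o :: l, OneSided C b := by
  intro C hC b hb
  have hC' : ∀ x ∈ C, o < x := fun x hx => by
    rcases mem_consNonempty hC with rfl | hC
    exacts [(h.bounds List.mem_cons_self (Finset.mem_union_right _ hx)).1,
      (h.bounds (List.mem_cons_of_mem _ hC) hx).1]
  rcases List.mem_cons.1 hb with rfl | hb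
  · exact Or.inr hC'
  · rcases mem_consNonempty hC with rfl | hC
    · exact Or.inl fun x hx => hlt x hx b hb
    · exact (List.rel_of_pairwise_cons h.nc.pairwise hC).2 b
        (Finset.mem_union_left _ (List.mem_toFinset.2 hb))

theorem refines_consNonempty_tail (h : IsTreeFamily (k :: t) o ((l.toFinset ∪ H) :: L))
    (hlt : ∀ y ∈ H, ∀ a ∈ l, y < a) (hl : l.Nodup) (hlen : l.length = k - 1) :
    Refines (t.map (· - 1)) ((consNonempty H L).map Finset.card) := by
  obtain ⟨v₁, v₂, hv, hB, hr₂⟩ := Refines.exists_of_cons_cons (by simpa using h.refines)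
  rw [Finset.card_union_of_disjoint (Finset.disjoint_right.2 fun y hy ha =>
    lt_irrefl y (hlt y hy y (List.mem_toFinset.1 ha))), List.toFinset_card_of_nodup hl,
    hlen] at hB
  rw [hv]
  refine refines_consNonempty (fun x hx => ?_) (by omega) hr₂
  obtain ⟨y, hy, rfl⟩ := List.mem_map.1 (hv ▸ List.mem_append_left v₂ hx)
  have := h.two_le y (List.mem_cons_of_mem _ hy)
  omega

theorem exists_root_split {L : List (Finset ℕ)} (h : IsTreeFamily (k :: t) o L) :
    ∃ (l : List ℕ) (H : Finset ℕ) (L' : List (Finset ℕ)) (ms : List ℕ),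
      L = (l.toFinset ∪ H) :: L' ∧ l.Pairwise (· < ·) ∧ l.length = k - 1 ∧
      (∀ y ∈ H, ∀ a ∈ l, y < a) ∧ (H.Nonempty → o + 1 ∈ H) ∧ (∀ C ∈ L', o + 1 ∉ C) ∧
      offsets o ms = o :: l ∧ IsForestFamily ms t o (consNonempty H L') := by
  obtain ⟨B, L', rfl, hoB⟩ := h.exists_eq_cons
  obtain ⟨l, H, rfl, hlen, hl, hlt⟩ := Finset.exists_eq_union_of_le_card h.sub_one_le_card
  have hL' : ∀ C ∈ L', o + 1 ∉ C := fun C hC =>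
    Finset.disjoint_left.1 (List.rel_of_pairwise_cons h.nc.pairwise hC).disjoint hoB
  have hlB : ∀ a ∈ l, o < a ∧ a ≤ o + ((k :: t).map (· - 1)).sum := fun a ha =>
    h.bounds List.mem_cons_self (Finset.mem_union_left _ (List.mem_toFinset.2 ha))
  have hH : H.Nonempty → o + 1 ∈ H := fun ⟨y, hy⟩ => by
    refine (Finset.mem_union.1 hoB).resolve_left fun ho => ?_
    have := hlt y hy _ (List.mem_toFinset.1 ho)
    have := (h.bounds List.mem_cons_self (Finset.mem_union_right _ hy)).1
    omega
  obtain ⟨ms, hms, hsum, hpos⟩ := exists_offsets_eq (top := o + ((k :: t).map (· - 1)).sum + 1)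
    (.cons (fun a ha => (hlB a ha).1) hl) fun b hb => by
      rcases List.mem_cons.1 hb with rfl | hb
      · omega
      · have := (hlB b hb).2
        omega
  refine ⟨l, H, L', ms, rfl, hl, hlen, hlt, hH, hL', hms, hpos,
    fun x hx => h.two_le x (List.mem_cons_of_mem _ hx), h.isNCBlockList_consNonempty_tail hH hL',
    ?_, hms ▸ h.oneSided_consNonempty_tail hlt, h.refines_consNonempty_tail hlt hl.nodup hlen⟩
  rw [h.blockUnion_consNonempty_tail hlt, hms]
  simp only [List.map_cons, List.sum_cons] at hsum ⊢
  ext x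
  by_cases hx : x ∈ l
  · simp [hx]
  · simp [hx]
    omega

open PTree

theorem existsUnique_nil {L : List (Finset ℕ)} (h : IsTreeFamily [] o L) :
    ∃! T : PTree, T.signature = [] ∧ T.blocks o = L := by
  obtain rfl : L = [] := h.nc.eq_nil (by simp [h.blockUnion_eq])
  refine ⟨node [], ⟨by simp [signature], blocks_leaf o⟩, ?_⟩
  rintro ⟨_ | ⟨c, cs⟩⟩ ⟨hsig, -⟩
  · rfl
  · simp [signature_cons] at hsig

theorem existsUnique_cons {L : List (Finset ℕ)} (h : IsTreeFamily (k :: t) o L)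
    (hforest : ∀ {ms o L}, IsForestFamily ms t o L → ∃! ts : List PTree,
      ts.map leaves = ms ∧ (ts.map signature).flatten = t ∧ forestBlocks ts o = L) :
    ∃! T : PTree, T.signature = k :: t ∧ T.blocks o = L := by
  obtain ⟨l, H, L', ms, rfl, hl, hlen, hlt, hH, hL', hms, hF⟩ := h.exists_root_split
  obtain ⟨_ | ⟨c, cs⟩, ⟨hts, htsig, htbl⟩, huniq⟩ := hforest hF
  · simpa [← hts, offsets] using congrArg List.length hms
  have hcs : cs.length = k - 1 := by
    simpa [length_offsets, ← hts, hlen] using congrArg List.length hms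
  have hk := h.two_le k List.mem_cons_self
  have hsig : (node (c :: cs)).signature = k :: t := by
    rw [signature_cons, hcs, Nat.sub_add_cancel (by omega), ← htsig, List.map_cons,
      List.flatten_cons]
  refine ⟨node (c :: cs), ⟨hsig, ((blocks_node_eq_cons_iff (hsig ▸ h.two_le) hl (by omega) hlt
    hH hL').2 ⟨hts ▸ hms, htbl⟩)⟩, ?_⟩
  rintro ⟨_ | ⟨c', cs'⟩⟩ ⟨hsig', hbl'⟩
  · simp [signature] at hsig'
  have hT' := hsig' ▸ h.two_le
  rw [signature_cons, List.cons.injEq] at hsig'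
  obtain ⟨hoff, hfb⟩ := (blocks_node_eq_cons_iff hT' hl (by omega) hlt hH hL').1 hbl'
  have hsum : ((c' :: cs').map leaves).sum = ms.sum := by
    rw [← hts, List.map_cons, List.sum_cons, List.map_cons, List.sum_cons, ← leaves_cons,
      ← leaves_cons, leaves_eq, leaves_eq, hsig, signature_cons, hsig'.1, hsig'.2]
  rw [huniq (c' :: cs') ⟨offsets_injective (hoff.trans hms.symm) hsum, by simpa using hsig'.2, hfb⟩]

theorem existsUnique {s : List ℕ} {L : List (Finset ℕ)} (h : IsTreeFamily s o L) :
    ∃! T : PTree, T.signature = s ∧ T.blocks o = L := by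
  induction hn : s.length using Nat.strong_induction_on generalizing s o L with
  | _ n ih =>
    obtain _ | ⟨k, t⟩ := s
    · exact h.existsUnique_nil
    · exact h.existsUnique_cons fun hF => hF.existsUnique fun hs h' =>
        ih _ (by simp at hn; omega) h' rfl

end IsTreeFamily

/-! ### Noncrossing partitions -/

theorem IsTreeFamily.blockUnion_eq_Icc {s : List ℕ} {L : List (Finset ℕ)}
    (h : IsTreeFamily s 0 L) : blockUnion L = Finset.Icc 1 (s.sum - s.length) := by
  rw [h.blockUnion_eq, zero_add, ← List.sum_map_sub_one fun x hx => by have := h.two_le x hx; omega]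
  rfl

def IsTreeFamily.finpartition {s : List ℕ} {L : List (Finset ℕ)} (h : IsTreeFamily s 0 L) :
    Finpartition (Finset.Icc 1 (s.sum - s.length)) where
  parts := L.toFinset
  supIndep := by
    have : Std.Symm (Disjoint : Finset ℕ → Finset ℕ → Prop) := ⟨fun _ _ h => h.symm⟩
    rw [Finset.supIndep_iff_pairwiseDisjoint]
    exact fun B hB C hC hne =>
      h.nc.pairwise_disjoint.forall (List.mem_toFinset.1 hB) (List.mem_toFinset.1 hC) hne
  sup_parts := h.blockUnion_eq_Icc
  bot_notMem hb := (h.nc.nonempty ⊥ (List.mem_toFinset.1 hb)).ne_empty rfl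

theorem noncrossing_refines_iff_isTreeFamily {s : List ℕ} (hs : ∀ x ∈ s, 2 ≤ x)
    (π : Finpartition (Finset.Icc 1 (s.sum - s.length))) :
    (Noncrossing π ∧ ∃ L, SortedBlocks π L ∧ Refines (s.map (· - 1)) (L.map Finset.card)) ↔
      ∃ L, L.toFinset = π.parts ∧ IsTreeFamily s 0 L := by
  have hmem : ∀ {L : List (Finset ℕ)}, L.toFinset = π.parts → ∀ {B}, B ∈ L ↔ B ∈ π.parts :=
    fun hL B => by rw [← hL, List.mem_toFinset]
  constructor
  · rintro ⟨hnc, L, ⟨-, hL, hsort⟩, href⟩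
    refine ⟨L, hL, hs, .of_noncrossing (fun B hB => π.nonempty_of_mem_parts ((hmem hL).1 hB))
      (fun B hB C hC => π.disjoint ((hmem hL).1 hB) ((hmem hL).1 hC)) hsort
      fun B hB C hC hne x y z w hxy hyz hzw hx hz hy hw => hnc ⟨B, (hmem hL).1 hB, C,
        (hmem hL).1 hC, hne, x, y, z, w, hxy, hyz, hzw, hx, hz, hy, hw⟩, ?_, href⟩
    rw [blockUnion, hL, π.sup_parts, zero_add,
      List.sum_map_sub_one fun x hx => by have := hs x hx; omega]
    rfl
  · rintro ⟨L, hL, h⟩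
    refine ⟨fun ⟨B, hB, C, hC, hne, x, y, z, w, hxy, hyz, hzw, hx, hz, hy, hw⟩ =>
      h.nc.not_crossing ((hmem hL).2 hB) ((hmem hL).2 hC) hne hxy hyz hzw hx hz hy hw,
      L, ⟨h.nc.nodup, hL, h.nc.pairwise.imp fun h => h.1⟩, h.refines⟩

/-- For every composition `s` with all entries at least 2, the set of `s`-trees is in
bijection with the set of noncrossing `(s-𝟏)`-partitions of `[|s| - ℓ(s)]`. -/
theorem sTrees_equiv_noncrossingPartitions (s : List ℕ) (hs : ∀ x ∈ s, 2 ≤ x) :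
    Nonempty ({T : PTree // T.signature = s} ≃
      {π : Finpartition (Finset.Icc 1 (s.sum - s.length)) // Noncrossing π ∧
        ∃ L : List (Finset ℕ), SortedBlocks π L ∧
          Refines (s.map (fun x => x - 1)) (L.map Finset.card)}) := by
  have hfam : ∀ T : {T : PTree // T.signature = s}, IsTreeFamily s 0 (T.1.blocks 0) :=
    fun ⟨_, hT⟩ => by subst hT; exact PTree.isTreeFamily_blocks hs 0
  refine ⟨Equiv.ofBijective (fun T => ⟨(hfam T).finpartition,
    (noncrossing_refines_iff_isTreeFamily hs _).2 ⟨_, rfl, hfam T⟩⟩)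
    ⟨fun T₁ T₂ hf => ?_, fun π => ?_⟩⟩
  · have hbl := (hfam T₁).nc.eq_of_toFinset_eq (hfam T₂).nc (congrArg (fun π => π.1.parts) hf)
    exact Subtype.ext ((hfam T₁).existsUnique.unique ⟨T₁.2, rfl⟩ ⟨T₂.2, hbl.symm⟩)
  · obtain ⟨L, hL, h⟩ := (noncrossing_refines_iff_isTreeFamily hs π.1).1 π.2
    obtain ⟨T, ⟨hT, rfl⟩, -⟩ := h.existsUnique
    exact ⟨⟨T, hT⟩, Subtype.ext (Finpartition.ext hL)⟩
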